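/- arXiv:2512.14940 — 3 statements merged into one kernel-verified Lean document; each statement's English description precedes it below -/
import Mathlib

section
/- Let n be a positive integer and φ a real number. Let N = {t ∈ (0, 2π) : cos(nt − φ) < 0}. Then ∫_N cos(nt − φ) dt = −2. -/
/-!
On `(0, 2π)` the integrand restricted to `N` is `min (cos (n t - φ)) 0 = (cos - |cos|) / 2`.
Substituting `u = n t - φ` and using periodicity, `n` full periods divided by `n` give
`∫₀^{2π} cos = 0` and `∫₀^{2π} |cos| = 4`, so the integral is `(0 - 4) / 2 = -2`.
-/

open Real MeasureTheory

lemma min_zero_eq_half_sub_abs (a : ℝ) : min a 0 = (a - |a|) / 2 := by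
  rcases le_or_gt a 0 with h | h
  · rw [min_eq_left h, abs_of_nonpos h]; ring
  · rw [min_eq_right h.le, abs_of_pos h]; ring

lemma setIntegral_setOf_mem_and_neg {α : Type*} [MeasurableSpace α] {μ : Measure α}
    {f : α → ℝ} (hf : Measurable f) {s : Set α} :
    ∫ x in {x | x ∈ s ∧ f x < 0}, f x ∂μ = ∫ x in s, min (f x) 0 ∂μ := by
  change ∫ x in s ∩ {x | f x < 0}, f x ∂μ = _
  rw [← setIntegral_indicator (measurableSet_lt hf measurable_const)]
  congr 1 with x
  simp only [Set.indicator_apply, Set.mem_ofPred_eq]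
  split_ifs with hx
  · exact (min_eq_left hx.le).symm
  · exact (min_eq_right (not_lt.1 hx)).symm

lemma Function.Periodic.intervalIntegral_comp_nat_mul_sub {E : Type*} [NormedAddCommGroup E]
    [NormedSpace ℝ E] {f : ℝ → E} {T : ℝ} (hf : Periodic f T)
    (h_int : ∀ a b, IntervalIntegrable f volume a b) {n : ℕ} (hn : n ≠ 0) (c : ℝ) :
    ∫ t in 0..T, f (n * t - c) = ∫ t in 0..T, f t := by
  have hend : (n : ℝ) * T - c = -c + (n : ℤ) • T := by rw [zsmul_eq_mul]; push_cast; ring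
  rw [intervalIntegral.integral_comp_mul_sub f (Nat.cast_ne_zero.2 hn), mul_zero, zero_sub, hend,
    hf.intervalIntegral_add_zsmul_eq n (-c) h_int, hf.intervalIntegral_add_eq (-c) 0, zero_add,
    ← Int.cast_smul_eq_zsmul ℝ, smul_smul, Int.cast_natCast,
    inv_mul_cancel₀ (Nat.cast_ne_zero.2 hn), one_smul]

lemma integral_abs_cos_zero_two_pi : ∫ x in (0)..(2 * π), |cos x| = 4 := by
  have hper : Function.Periodic (fun x => |cos x|) π := fun x => by simp [cos_add_pi]
  have hhalf : ∫ x in (-(π / 2))..(π / 2), |cos x| = 2 := by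
    rw [intervalIntegral.integral_congr (g := cos), integral_cos]
    · norm_num
    · intro x hx
      rw [Set.uIcc_of_le (by linarith [pi_pos])] at hx
      exact abs_of_nonneg (cos_nonneg_of_mem_Icc hx)
  calc ∫ x in (0)..(2 * π), |cos x|
      = ∫ x in (0)..0 + (2 : ℤ) • π, |cos x| := by norm_num [two_zsmul, two_mul]
    _ = 2 * ∫ x in (-(π / 2))..(-(π / 2) + π), |cos x| := by
        rw [hper.intervalIntegral_add_zsmul_eq 2 0 continuous_cos.abs.intervalIntegrable,
          hper.intervalIntegral_add_eq 0 (-(π / 2))]; norm_num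
    _ = 4 := by rw [show -(π / 2) + π = π / 2 by ring, hhalf]; norm_num

theorem stmt_1 (n : ℕ) (hn : 1 ≤ n) (φ : ℝ) :
    ∫ t in {t : ℝ | t ∈ Set.Ioo 0 (2 * π) ∧ Real.cos (n * t - φ) < 0},
      Real.cos (n * t - φ) = -2 := by
  have hn0 : n ≠ 0 := by omega
  have hcont : Continuous fun t : ℝ => cos (n * t - φ) := by fun_prop
  have habs_periodic : Function.Periodic (fun x => |cos x|) (2 * π) := cos_periodic.comp abs
  rw [setIntegral_setOf_mem_and_neg hcont.measurable, ← integral_Ioc_eq_integral_Ioo,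
    ← intervalIntegral.integral_of_le two_pi_pos.le]
  simp_rw [min_zero_eq_half_sub_abs]
  rw [intervalIntegral.integral_div, intervalIntegral.integral_sub (hcont.intervalIntegrable _ _)
      (hcont.abs.intervalIntegrable _ _),
    cos_periodic.intervalIntegral_comp_nat_mul_sub continuous_cos.intervalIntegrable hn0,
    habs_periodic.intervalIntegral_comp_nat_mul_sub continuous_cos.abs.intervalIntegrable hn0]
  norm_num [integral_abs_cos_zero_two_pi]
end

section
/- Suppose x : ℝ → ℝ is a 2π-periodic C² solution of x'' + f(x)x' + g(x) + n²x = e(t), where e is continuous and 2π-periodic, f, g are continuous, F(x) = ∫₀ˣ f, the finite limits F(±∞), g(±∞) exist, and F(−∞) < F(s) < F(∞), g(−∞) < g(s) < g(∞) for all real s. Let A_n = ∫₀^{2π} e(t)cos(nt) dt and B_n = ∫₀^{2π} e(t)sin(nt) dt. Then √(A_n² + B_n²) < 2n(F(∞) − F(−∞)) + 2(g(∞) − g(−∞)). -/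
/-!
Pick a phase `φ` with `A cos φ + B sin φ = √(A² + B²)`, so that `√(A² + B²) = ∫ e(t) cos(nt - φ)`.
Test the equation against `cos(nt - φ)` over one period and integrate by parts: the terms `x''` and
`n²x` cancel because `cos(nt - φ)` solves `y'' + n²y = 0`, and `f(x)x' = (F ∘ x)'` becomes
`n ∫ F(x) sin(nt - φ)`. Hence `√(A² + B²) = n ∫ F(x) sin(nt - φ) + ∫ g(x) cos(nt - φ)`.
A value `v ∈ (lo, hi)` satisfies `v σ ≤ (lo + hi)/2 σ + (hi - lo)/2 |σ|`, and `sin(nt - φ)`,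
`cos(nt - φ)` have integral `0` and absolute integral `4` over a period, which bounds the two
integrals by `2(F(∞) - F(-∞))` and, strictly, by `2(g(∞) - g(-∞))`.
-/

open Real MeasureTheory Filter intervalIntegral

theorem exists_mul_cos_add_mul_sin_eq_sqrt (a b : ℝ) :
    ∃ φ : ℝ, a * cos φ + b * sin φ = √(a ^ 2 + b ^ 2) := by
  set z : ℂ := ⟨a, b⟩
  have hz : ‖z‖ = √(a ^ 2 + b ^ 2) := Complex.norm_eq_sqrt_sq_add_sq z
  set r := √(a ^ 2 + b ^ 2)
  refine ⟨Complex.arg z, ?_⟩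
  have hcos : r * cos (Complex.arg z) = a := hz ▸ Complex.norm_mul_cos_arg z
  have hsin : r * sin (Complex.arg z) = b := hz ▸ Complex.norm_mul_sin_arg z
  rw [← hcos, ← hsin]
  linear_combination r * sin_sq_add_cos_sq (Complex.arg z)

theorem Function.Periodic.deriv {f : ℝ → ℝ} {T : ℝ} (h : Function.Periodic f T) :
    Function.Periodic (deriv f) T := fun t => by
  rw [← deriv_comp_add_const, h.funext]

section Sinusoid

variable {n : ℕ} (φ : ℝ)

theorem hasDerivAt_cos_nat_mul_sub (t : ℝ) :
    HasDerivAt (fun t => cos (n * t - φ)) (-(n * sin (n * t - φ))) t := by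
  simpa [mul_comm] using (((hasDerivAt_id t).const_mul (n : ℝ)).sub_const φ).cos

theorem hasDerivAt_sin_nat_mul_sub (t : ℝ) :
    HasDerivAt (fun t => sin (n * t - φ)) (n * cos (n * t - φ)) t := by
  simpa [mul_comm] using (((hasDerivAt_id t).const_mul (n : ℝ)).sub_const φ).sin

theorem integral_sin_nat_mul_sub (hn : n ≠ 0) :
    ∫ t in (0 : ℝ)..2 * π, sin (n * t - φ) = 0 := by
  rw [integral_comp_mul_sub sin (Nat.cast_ne_zero.mpr hn), integral_sin, cos_nat_mul_two_pi_sub]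
  simp

theorem integral_cos_nat_mul_sub (hn : n ≠ 0) :
    ∫ t in (0 : ℝ)..2 * π, cos (n * t - φ) = 0 := by
  rw [integral_comp_mul_sub cos (Nat.cast_ne_zero.mpr hn), integral_cos, sin_nat_mul_two_pi_sub]
  simp

theorem integral_abs_sin_nat_mul_sub (hn : n ≠ 0) :
    ∫ t in (0 : ℝ)..2 * π, |sin (n * t - φ)| = 4 := by
  have hper : Function.Periodic (fun u => |sin u|) π := fun u => by simp [sin_add_pi]
  have hend : (n : ℝ) * (2 * π) - φ = -φ + (2 * n : ℤ) • π := by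
    rw [zsmul_eq_mul]; push_cast; ring
  have hhalf : ∫ u in (0 : ℝ)..0 + π, |sin u| = 2 := by
    rw [zero_add, integral_congr (g := sin) fun u hu => abs_of_nonneg <|
      sin_nonneg_of_mem_Icc (by rwa [Set.uIcc_of_le pi_pos.le] at hu), integral_sin]
    norm_num
  rw [integral_comp_mul_sub (fun u => |sin u|) (Nat.cast_ne_zero.mpr hn), hend, mul_zero,
    zero_sub, hper.intervalIntegral_add_zsmul_eq _ _ fun _ _ =>
      continuous_sin.abs.intervalIntegrable _ _,
    hper.intervalIntegral_add_eq _ 0, hhalf, zsmul_eq_mul, smul_eq_mul]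
  push_cast
  field_simp
  ring

theorem integral_abs_cos_nat_mul_sub (hn : n ≠ 0) :
    ∫ t in (0 : ℝ)..2 * π, |cos (n * t - φ)| = 4 := by
  convert integral_abs_sin_nat_mul_sub (φ - π / 2) hn using 4 with t
  rw [← sin_add_pi_div_two]
  ring_nf

theorem exists_cos_nat_mul_sub_ne_zero (hn : n ≠ 0) :
    ∃ t ∈ Set.Ioc 0 (2 * π), cos (n * t - φ) ≠ 0 := by
  have hint : ∫ t in Set.Ioc 0 (2 * π), |cos (n * t - φ)| ≠ 0 := by
    rw [← integral_of_le two_pi_pos.le, integral_abs_cos_nat_mul_sub φ hn]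
    norm_num
  obtain ⟨t, ht, hne⟩ := exists_ne_zero_of_setIntegral_ne_zero hint
  exact ⟨t, ht, abs_ne_zero.mp hne⟩

theorem integral_deriv_mul_eq_neg_integral_mul_deriv {a b : ℝ} {u v u' v' : ℝ → ℝ}
    (hu : ∀ t ∈ Set.uIcc a b, HasDerivAt u (u' t) t)
    (hv : ∀ t ∈ Set.uIcc a b, HasDerivAt v (v' t) t)
    (hu' : IntervalIntegrable u' volume a b) (hv' : IntervalIntegrable v' volume a b)
    (hua : u b = u a) (hva : v b = v a) :
    ∫ t in a..b, u' t * v t = -∫ t in a..b, u t * v' t := by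
  rw [integral_mul_deriv_eq_deriv_mul hu hv hu' hv', hua, hva]
  ring

variable {u u' : ℝ → ℝ}

theorem integral_deriv_mul_cos_nat_mul_sub (hu : ∀ t, HasDerivAt u (u' t) t)
    (hu' : Continuous u') (hper : Function.Periodic u (2 * π)) :
    ∫ t in (0 : ℝ)..2 * π, u' t * cos (n * t - φ)
      = n * ∫ t in (0 : ℝ)..2 * π, u t * sin (n * t - φ) := by
  rw [integral_deriv_mul_eq_neg_integral_mul_deriv (fun t _ => hu t)
    (fun t _ => hasDerivAt_cos_nat_mul_sub φ t) (hu'.intervalIntegrable _ _)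
    ((by fun_prop : Continuous _).intervalIntegrable _ _) (by simpa using hper 0)
    (by simp [cos_nat_mul_two_pi_sub]), ← intervalIntegral.integral_const_mul,
    ← intervalIntegral.integral_neg]
  congr 1 with t
  ring

theorem integral_deriv_mul_sin_nat_mul_sub (hu : ∀ t, HasDerivAt u (u' t) t)
    (hu' : Continuous u') (hper : Function.Periodic u (2 * π)) :
    ∫ t in (0 : ℝ)..2 * π, u' t * sin (n * t - φ)
      = -(n * ∫ t in (0 : ℝ)..2 * π, u t * cos (n * t - φ)) := by
  rw [integral_deriv_mul_eq_neg_integral_mul_deriv (fun t _ => hu t)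
    (fun t _ => hasDerivAt_sin_nat_mul_sub φ t) (hu'.intervalIntegrable _ _)
    ((by fun_prop : Continuous _).intervalIntegrable _ _) (by simpa using hper 0)
    (by simp [sin_nat_mul_two_pi_sub]), ← intervalIntegral.integral_const_mul]
  congr 2 with t
  ring

end Sinusoid

theorem mul_le_midpoint_mul_add_abs {lo hi v σ : ℝ} (hlo : lo ≤ v) (hhi : v ≤ hi) :
    v * σ ≤ (lo + hi) / 2 * σ + (hi - lo) / 2 * |σ| := by
  rcases le_or_gt 0 σ with hσ | hσ
  · rw [abs_of_nonneg hσ]; nlinarith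
  · rw [abs_of_neg hσ]; nlinarith

theorem mul_lt_midpoint_mul_add_abs {lo hi v σ : ℝ} (hlo : lo < v) (hhi : v < hi) (hσ : σ ≠ 0) :
    v * σ < (lo + hi) / 2 * σ + (hi - lo) / 2 * |σ| := by
  rcases hσ.lt_or_gt with hσ | hσ
  · rw [abs_of_neg hσ]; nlinarith
  · rw [abs_of_pos hσ]; nlinarith

section Bounds

variable {a b lo hi : ℝ} {w σ : ℝ → ℝ}

theorem integral_midpoint_mul_add_abs (hσ : Continuous σ) :
    ∫ t in a..b, ((lo + hi) / 2 * σ t + (hi - lo) / 2 * |σ t|)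
      = (lo + hi) / 2 * (∫ t in a..b, σ t) + (hi - lo) / 2 * ∫ t in a..b, |σ t| := by
  rw [intervalIntegral.integral_add ((hσ.const_mul _).intervalIntegrable _ _)
    ((hσ.abs.const_mul _).intervalIntegrable _ _), intervalIntegral.integral_const_mul,
    intervalIntegral.integral_const_mul]

theorem integral_mul_le_of_le_of_le (hab : a ≤ b) (hw : Continuous w) (hσ : Continuous σ)
    (hlo : ∀ t, lo ≤ w t) (hhi : ∀ t, w t ≤ hi) :
    ∫ t in a..b, w t * σ t
      ≤ (lo + hi) / 2 * (∫ t in a..b, σ t) + (hi - lo) / 2 * ∫ t in a..b, |σ t| := by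
  rw [← integral_midpoint_mul_add_abs hσ]
  exact integral_mono_on hab ((hw.mul hσ).intervalIntegrable _ _)
    ((by fun_prop : Continuous _).intervalIntegrable _ _)
    fun t _ => mul_le_midpoint_mul_add_abs (hlo t) (hhi t)

theorem integral_mul_lt_of_lt_of_lt (hab : a < b) (hw : Continuous w) (hσ : Continuous σ)
    (hlo : ∀ t, lo < w t) (hhi : ∀ t, w t < hi) (hσ₀ : ∃ t ∈ Set.Ioc a b, σ t ≠ 0) :
    ∫ t in a..b, w t * σ t
      < (lo + hi) / 2 * (∫ t in a..b, σ t) + (hi - lo) / 2 * ∫ t in a..b, |σ t| := by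
  obtain ⟨t₀, ht₀, hσt₀⟩ := hσ₀
  rw [← integral_midpoint_mul_add_abs hσ]
  exact integral_lt_integral_of_continuousOn_of_le_of_exists_lt hab (hw.mul hσ).continuousOn
    (by fun_prop) (fun t _ => mul_le_midpoint_mul_add_abs (hlo t).le (hhi t).le)
    ⟨t₀, Set.Ioc_subset_Icc_self ht₀, mul_lt_midpoint_mul_add_abs (hlo t₀) (hhi t₀) hσt₀⟩

end Bounds

theorem integral_mul_cos_sub (ω φ : ℝ) {a b : ℝ} {e : ℝ → ℝ} (he : Continuous e) :
    ∫ t in a..b, e t * cos (ω * t - φ)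
      = (∫ t in a..b, e t * cos (ω * t)) * cos φ + (∫ t in a..b, e t * sin (ω * t)) * sin φ := by
  rw [← intervalIntegral.integral_mul_const, ← intervalIntegral.integral_mul_const,
    ← intervalIntegral.integral_add ((by fun_prop : Continuous _).intervalIntegrable _ _)
      ((by fun_prop : Continuous _).intervalIntegrable _ _)]
  congr 1 with t
  rw [cos_sub]
  ring

theorem integral_forcing_mul_cos_nat_mul_sub {n : ℕ} {e f g F x : ℝ → ℝ}
    (hF : ∀ s, HasDerivAt F (f s) s) (hf : Continuous f) (hg : Continuous g)
    (hx : ContDiff ℝ 2 x) (hxper : Function.Periodic x (2 * π))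
    (heq : ∀ t, deriv (deriv x) t + f (x t) * deriv x t + g (x t) + n ^ 2 * x t = e t) (φ : ℝ) :
    ∫ t in (0 : ℝ)..2 * π, e t * cos (n * t - φ)
      = n * (∫ t in (0 : ℝ)..2 * π, F (x t) * sin (n * t - φ))
        + ∫ t in (0 : ℝ)..2 * π, g (x t) * cos (n * t - φ) := by
  have hx' : ContDiff ℝ 1 (deriv x) := hx.iterate_deriv' 1 1
  have hx_deriv : ∀ t, HasDerivAt x (deriv x t) t :=
    fun t => (hx.differentiable two_ne_zero t).hasDerivAt
  have hx'_deriv : ∀ t, HasDerivAt (deriv x) (deriv (deriv x) t) t :=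
    fun t => (hx'.differentiable one_ne_zero t).hasDerivAt
  have hx_cont : Continuous x := hx.continuous
  have hx'_cont : Continuous (deriv x) := hx'.continuous
  have hx''_cont : Continuous (deriv (deriv x)) := hx'.continuous_deriv le_rfl
  have hFx_deriv : ∀ t, HasDerivAt (fun t => F (x t)) (f (x t) * deriv x t) t :=
    fun t => (hF (x t)).comp t (hx_deriv t)
  have h_accel : ∫ t in (0 : ℝ)..2 * π, deriv (deriv x) t * cos (n * t - φ)
      = -(n ^ 2 * ∫ t in (0 : ℝ)..2 * π, x t * cos (n * t - φ)) := by
    rw [integral_deriv_mul_cos_nat_mul_sub φ hx'_deriv hx''_cont hxper.deriv,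
      integral_deriv_mul_sin_nat_mul_sub φ hx_deriv hx'_cont hxper]
    ring
  have h_damping : ∫ t in (0 : ℝ)..2 * π, f (x t) * deriv x t * cos (n * t - φ)
      = n * ∫ t in (0 : ℝ)..2 * π, F (x t) * sin (n * t - φ) :=
    integral_deriv_mul_cos_nat_mul_sub φ hFx_deriv (by fun_prop) fun t => by rw [hxper]
  simp_rw [← heq, add_mul]
  rw [intervalIntegral.integral_add, intervalIntegral.integral_add,
    intervalIntegral.integral_add, h_accel, h_damping]
  · simp_rw [mul_assoc, intervalIntegral.integral_const_mul]
    ring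
  all_goals exact (by fun_prop : Continuous _).intervalIntegrable _ _

theorem stmt_6_general (n : ℕ) (hn : 1 ≤ n)
    (e f g : ℝ → ℝ) (he : Continuous e)
    (hf : Continuous f) (hg : Continuous g)
    (F : ℝ → ℝ) (hF : ∀ s, F s = ∫ u in (0:ℝ)..s, f u)
    (Fm Fp gm gp : ℝ)
    (hFb : ∀ s, Fm < F s ∧ F s < Fp) (hgb : ∀ s, gm < g s ∧ g s < gp)
    (x : ℝ → ℝ) (hx : ContDiff ℝ 2 x) (hxper : Function.Periodic x (2 * π))
    (heq : ∀ t, deriv (deriv x) t + f (x t) * deriv x t + g (x t) + n ^ 2 * x t = e t)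
    (An Bn : ℝ)
    (hA : An = ∫ t in (0:ℝ)..(2 * π), e t * Real.cos (n * t))
    (hB : Bn = ∫ t in (0:ℝ)..(2 * π), e t * Real.sin (n * t)) :
    Real.sqrt (An ^ 2 + Bn ^ 2) < 2 * n * (Fp - Fm) + 2 * (gp - gm) := by
  have hn₀ : n ≠ 0 := Nat.one_le_iff_ne_zero.mp hn
  obtain ⟨φ, hφ⟩ := exists_mul_cos_add_mul_sin_eq_sqrt An Bn
  have hF_deriv : ∀ s, HasDerivAt F (f s) s := fun s => by
    rw [funext hF]; exact (hf.integral_hasStrictDerivAt 0 s).hasDerivAt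
  have hF_cont : Continuous F := continuous_iff_continuousAt.mpr fun s => (hF_deriv s).continuousAt
  have hF_term := integral_mul_le_of_le_of_le two_pi_pos.le (w := fun t => F (x t))
    (hF_cont.comp hx.continuous)
    (by fun_prop : Continuous fun t => sin (n * t - φ)) (fun t => (hFb (x t)).1.le)
    (fun t => (hFb (x t)).2.le)
  have hg_term := integral_mul_lt_of_lt_of_lt two_pi_pos (w := fun t => g (x t))
    (hg.comp hx.continuous)
    (by fun_prop : Continuous fun t => cos (n * t - φ)) (fun t => (hgb (x t)).1)
    (fun t => (hgb (x t)).2) (exists_cos_nat_mul_sub_ne_zero φ hn₀)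
  rw [integral_sin_nat_mul_sub φ hn₀, integral_abs_sin_nat_mul_sub φ hn₀] at hF_term
  rw [integral_cos_nat_mul_sub φ hn₀, integral_abs_cos_nat_mul_sub φ hn₀] at hg_term
  rw [← hφ, hA, hB, ← integral_mul_cos_sub _ _ he,
    integral_forcing_mul_cos_nat_mul_sub hF_deriv hf hg hx hxper heq]
  have hn_nonneg : (0 : ℝ) ≤ n := n.cast_nonneg
  nlinarith

theorem stmt_6 (n : ℕ) (hn : 1 ≤ n)
    (e f g : ℝ → ℝ) (he : Continuous e) (heper : Function.Periodic e (2 * π))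
    (hf : Continuous f) (hg : Continuous g)
    (F : ℝ → ℝ) (hF : ∀ s, F s = ∫ u in (0:ℝ)..s, f u)
    (Fm Fp gm gp : ℝ)
    (hFm : Tendsto F atBot (nhds Fm)) (hFp : Tendsto F atTop (nhds Fp))
    (hgm : Tendsto g atBot (nhds gm)) (hgp : Tendsto g atTop (nhds gp))
    (hFb : ∀ s, Fm < F s ∧ F s < Fp) (hgb : ∀ s, gm < g s ∧ g s < gp)
    (x : ℝ → ℝ) (hx : ContDiff ℝ 2 x) (hxper : Function.Periodic x (2 * π))
    (heq : ∀ t, deriv (deriv x) t + f (x t) * deriv x t + g (x t) + n ^ 2 * x t = e t)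
    (An Bn : ℝ)
    (hA : An = ∫ t in (0:ℝ)..(2 * π), e t * Real.cos (n * t))
    (hB : Bn = ∫ t in (0:ℝ)..(2 * π), e t * Real.sin (n * t)) :
    Real.sqrt (An ^ 2 + Bn ^ 2) < 2 * n * (Fp - Fm) + 2 * (gp - gm) :=
  stmt_6_general n hn e f g he hf hg F hF Fm Fp gm gp hFb hgb x hx hxper heq An Bn hA hB
end

section
/- Let G : ℝ² → ℝ² be continuous and V : ℝ² → ℝ be continuous. Suppose V(G(ξ)) > V(ξ) for every ξ ∈ ℝ². Then for any ξ₀ ∈ ℝ², the sequence defined by ξ_{k+1} = G(ξ_k) satisfies lim_{k→∞} ‖ξ_k‖ = ∞. -/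
/-! If the orbit stayed in a compact set infinitely often, it would have a cluster point `p`.
Since `V` increases along the orbit, every value `V (ξ k)` is at most the cluster value `V p`;
but `V (G p)` is a cluster value of the same sequence shifted by one, so `V (G p) ≤ V p`,
contradicting `V p < V (G p)`. -/

open Filter

theorem Monotone.le_of_mapClusterPt {ι α : Type*} [Preorder ι] [Preorder α] [TopologicalSpace α]
    [ClosedIciTopology α] {v : ι → α} (hv : Monotone v) {a : α} (ha : MapClusterPt a atTop v)
    (i : ι) : v i ≤ a :=
  isClosed_Ici.mem_of_mapClusterPt ha ((eventually_ge_atTop i).mono fun _ hj => hv hj)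

theorem tendsto_cocompact_of_lt_comp {X α : Type*} [TopologicalSpace X] [LinearOrder α]
    [TopologicalSpace α] [OrderClosedTopology α] {G : X → X} {V : X → α}
    (hG : Continuous G) (hV : Continuous V) (hinc : ∀ x, V x < V (G x))
    {ξ : ℕ → X} (hseq : ∀ k, ξ (k + 1) = G (ξ k)) :
    Tendsto ξ atTop (cocompact X) := by
  refine hasBasis_cocompact.tendsto_right_iff.2 fun K hK => ?_
  by_contra! hfreq
  simp only [Set.notMem_compl_iff] at hfreq
  obtain ⟨p, -, hp⟩ := hK.exists_mapClusterPt_of_frequently hfreq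
  have hmono : Monotone (V ∘ ξ) :=
    monotone_nat_of_le_succ fun k => by simpa [hseq k] using (hinc (ξ k)).le
  have hVp : MapClusterPt (V p) atTop (V ∘ ξ) := hp.continuousAt_comp hV.continuousAt
  have hVGp : MapClusterPt (V (G p)) atTop (fun k => V (ξ (k + 1))) := by
    simpa only [hseq, Function.comp_def] using
      (hp.continuousAt_comp hG.continuousAt).continuousAt_comp hV.continuousAt
  have hle : V (G p) ≤ V p :=
    isClosed_Iic.mem_of_mapClusterPt hVGp <|
      Eventually.of_forall fun k => hmono.le_of_mapClusterPt hVp (k + 1)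
  exact (hinc p).not_ge hle

theorem stmt_8 (G : EuclideanSpace ℝ (Fin 2) → EuclideanSpace ℝ (Fin 2))
    (V : EuclideanSpace ℝ (Fin 2) → ℝ)
    (hG : Continuous G) (hV : Continuous V)
    (hinc : ∀ ξ, V ξ < V (G ξ))
    (ξ : ℕ → EuclideanSpace ℝ (Fin 2))
    (hseq : ∀ k, ξ (k + 1) = G (ξ k)) :
    Tendsto (fun k => ‖ξ k‖) atTop atTop :=
  tendsto_norm_cocompact_atTop.comp (tendsto_cocompact_of_lt_comp hG hV hinc hseq)
end
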